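/- Expected joint error of the Gaussian linear posterior (Equation (21)): for any domain P over ℝ^d×{−1,+1} with P-almost surely x ≠ 0 and any w ∈ ℝ^d, the expected joint error satisfies e_P(ρ_w) = E_{(x,y)~P} [Φ(y·(w·x)/‖x‖)]². -/

import Mathlib

/-!
For fixed `x ≠ 0`, the map `w' ↦ w'·x` pushes `γ_w` forward to the one-dimensional Gaussian
`N(w·x, ‖x‖²)` (compare characteristic functions coordinatewise), so `h_{w'}` misclassifies
`(x, y)` with probability `Φ(y (w·x)/‖x‖)`. The integrand is bounded, so Fubini lets us integrate
over the two posterior draws first; they are independent, so the joint error at `(x, y)` is the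
square of that probability.
-/

open MeasureTheory

noncomputable section

/-- The 0-1 loss on labels in `{−1,+1}`, encoded by `Bool` (`false ↦ −1`, `true ↦ +1`). -/
def l01 (a b : Bool) : ℝ := if a = b then 0 else 1

/-- The real value of a label: `true ↦ +1`, `false ↦ −1`. -/
def yval (b : Bool) : ℝ := if b then 1 else -1

variable {d : ℕ}

/-- Dot product on `ℝ^d`. -/
def dotp (w x : Fin d → ℝ) : ℝ := ∑ i, w i * x i

/-- Euclidean norm on `ℝ^d`. -/
def nrm (x : Fin d → ℝ) : ℝ := Real.sqrt (∑ i, x i ^ 2)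

open Classical in
/-- The linear classifier `h_w(x) = sign(w·x)` (`true ↦ +1`, `false ↦ −1`). -/
def hlin (w x : Fin d → ℝ) : Bool := if 0 < dotp w x then true else false

/-- The Gaussian measure `γ_w` on `ℝ^d` with mean `w` and identity covariance, given as the
product over coordinates of one-dimensional Gaussians `N(w_i, 1)`. -/
def gauss (w : Fin d → ℝ) : Measure (Fin d → ℝ) :=
  Measure.pi fun i => ProbabilityTheory.gaussianReal (w i) 1

/-- The standard Gaussian tail function `Φ(z) = (1/√(2π)) ∫_z^∞ e^{−t²/2} dt`. -/
def gaussTail (z : ℝ) : ℝ :=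
  ∫ t in Set.Ici z, Real.exp (-t ^ 2 / 2) / Real.sqrt (2 * Real.pi)

open ProbabilityTheory Complex in
lemma map_pi_gaussianReal_sum_mul {ι : Type*} [Fintype ι] (m : ι → ℝ) (v : ι → NNReal)
    (x : ι → ℝ) :
    (Measure.pi fun i => gaussianReal (m i) (v i)).map (fun u => ∑ i, u i * x i)
      = gaussianReal (∑ i, m i * x i) (∑ i, (x i ^ 2).toNNReal * v i) := by
  refine Measure.ext_of_charFun (funext fun t => ?_)
  have hmeas : Measurable fun u : ι → ℝ => ∑ i, u i * x i := by fun_prop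
  calc charFun ((Measure.pi fun i => gaussianReal (m i) (v i)).map fun u => ∑ i, u i * x i) t
      = ∫ u, ∏ i, cexp ((t * x i : ℝ) * u i * I)
          ∂(Measure.pi fun i => gaussianReal (m i) (v i)) := by
        rw [charFun_apply_real, integral_map hmeas.aemeasurable (by fun_prop)]
        congr 1 with u
        rw [← Complex.exp_sum]
        push_cast
        rw [Finset.mul_sum, Finset.sum_mul]
        exact congrArg cexp (Finset.sum_congr rfl fun i _ => by ring)
    _ = ∏ i, charFun (gaussianReal (m i) (v i)) (t * x i) := by
        rw [integral_fintype_prod_eq_prod (fun i (s : ℝ) => cexp ((t * x i : ℝ) * s * I))]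
        simp only [charFun_apply_real]
    _ = charFun (gaussianReal (∑ i, m i * x i) (∑ i, (x i ^ 2).toNNReal * v i)) t := by
        simp only [charFun_gaussianReal, ← Complex.exp_sum]
        push_cast
        simp only [Real.coe_toNNReal _ (sq_nonneg _), Finset.mul_sum, Finset.sum_mul,
          Finset.sum_div, ← Finset.sum_sub_distrib]
        push_cast
        exact congrArg cexp (Finset.sum_congr rfl fun i _ => by ring)

section GaussianTail

open Set ProbabilityTheory

lemma gaussTail_nonneg (z : ℝ) : 0 ≤ gaussTail z :=
  integral_nonneg fun t => by positivity

lemma gaussianReal_zero_one_Ioi (a : ℝ) :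
    gaussianReal 0 1 (Ioi a) = ENNReal.ofReal (gaussTail a) := by
  rw [gaussianReal_apply_eq_integral 0 one_ne_zero, gaussTail, integral_Ici_eq_integral_Ioi]
  congr 2 with t
  simp [gaussianPDFReal, div_eq_inv_mul]

lemma gaussianReal_eq_map_affine (m : ℝ) (v : NNReal) :
    gaussianReal m v = (gaussianReal 0 1).map fun t => √v * t + m := by
  have hscale : (gaussianReal 0 1).map (√v * ·) = gaussianReal 0 v := by
    rw [gaussianReal_map_const_mul, mul_zero, mul_one]
    congr 1
    ext
    simp
  rw [← Function.comp_def (· + m) (√v * ·), ← Measure.map_map (by fun_prop) (by fun_prop),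
    hscale, gaussianReal_map_add_const, zero_add]

lemma gaussianReal_Ioi {v : NNReal} (hv : v ≠ 0) (m c : ℝ) :
    gaussianReal m v (Ioi c) = ENNReal.ofReal (gaussTail ((c - m) / √v)) := by
  have hσ : 0 < √(v : ℝ) := Real.sqrt_pos.mpr (NNReal.coe_pos.mpr (pos_iff_ne_zero.mpr hv))
  have hpre : (fun t => √v * t + m) ⁻¹' Ioi c = Ioi ((c - m) / √v) := by
    ext t
    rw [mem_preimage, mem_Ioi, mem_Ioi, div_lt_iff₀ hσ]
    constructor <;> intro h <;> linarith
  rw [gaussianReal_eq_map_affine, Measure.map_apply (by fun_prop) measurableSet_Ioi, hpre,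
    gaussianReal_zero_one_Ioi]

lemma gaussianReal_Iic {v : NNReal} (hv : v ≠ 0) (m c : ℝ) :
    gaussianReal m v (Iic c) = ENNReal.ofReal (gaussTail ((m - c) / √v)) := by
  have := nullSingletonClass_gaussianReal (μ := -m) hv
  rw [← neg_neg (Iic c), neg_Iic, ← neg_preimage, ← Measure.map_apply measurable_neg
    measurableSet_Ici, gaussianReal_map_neg, measure_congr Ioi_ae_eq_Ici.symm,
    gaussianReal_Ioi hv]
  ring_nf

end GaussianTail

section Measurability

variable {α : Type*} [MeasurableSpace α]

@[fun_prop]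
lemma Measurable.dotp {f g : α → Fin d → ℝ} (hf : Measurable f) (hg : Measurable g) :
    Measurable fun a => dotp (f a) (g a) := by
  unfold _root_.dotp
  fun_prop

@[fun_prop]
lemma Measurable.hlin {f g : α → Fin d → ℝ} (hf : Measurable f) (hg : Measurable g) :
    Measurable fun a => hlin (f a) (g a) :=
  Measurable.ite (measurableSet_lt measurable_const (hf.dotp hg)) measurable_const
    measurable_const

@[fun_prop]
lemma Measurable.l01 {f g : α → Bool} (hf : Measurable f) (hg : Measurable g) :
    Measurable fun a => l01 (f a) (g a) :=
  (measurable_of_countable (Function.uncurry _root_.l01)).comp (hf.prodMk hg)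

end Measurability

section LinearClassifier

open Set ProbabilityTheory

instance (w : Fin d → ℝ) : IsProbabilityMeasure (gauss w) := by
  unfold gauss
  infer_instance

lemma nrm_sq (x : Fin d → ℝ) : nrm x ^ 2 = ∑ i, x i ^ 2 :=
  Real.sq_sqrt (Finset.sum_nonneg fun i _ => sq_nonneg (x i))

lemma nrm_pos {x : Fin d → ℝ} (hx : x ≠ 0) : 0 < nrm x := by
  obtain ⟨i, hi⟩ := Function.ne_iff.mp hx
  exact Real.sqrt_pos.mpr
    (Finset.sum_pos' (fun j _ => sq_nonneg _) ⟨i, Finset.mem_univ i, pow_two_pos_of_ne_zero hi⟩)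

lemma gauss_map_dotp (w x : Fin d → ℝ) :
    (gauss w).map (fun u => dotp u x) = gaussianReal (dotp w x) (nrm x ^ 2).toNNReal := by
  have hvar : ∑ i, (x i ^ 2).toNNReal * 1 = (nrm x ^ 2).toNNReal := by
    ext
    rw [Real.coe_toNNReal _ (sq_nonneg _), nrm_sq]
    simp only [mul_one, NNReal.coe_sum, Real.coe_toNNReal _ (sq_nonneg (x _))]
  rw [← hvar]
  exact map_pi_gaussianReal_sum_mul w 1 x

lemma l01_hlin_eq_indicator (u x : Fin d → ℝ) (b : Bool) :
    l01 (hlin u x) b = (if b then Iic 0 else Ioi 0 : Set ℝ).indicator 1 (dotp u x) := by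
  cases b <;> by_cases h : 0 < dotp u x <;> simp [l01, hlin, h, not_lt.mp]

lemma integral_l01_hlin (w : Fin d → ℝ) {x : Fin d → ℝ} (hx : x ≠ 0) (b : Bool) :
    ∫ u, l01 (hlin u x) b ∂gauss w = gaussTail (yval b * dotp w x / nrm x) := by
  have hσ : √((nrm x ^ 2).toNNReal : ℝ) = nrm x := by
    rw [Real.coe_toNNReal _ (sq_nonneg _), Real.sqrt_sq (nrm_pos hx).le]
  have hv : (nrm x ^ 2).toNNReal ≠ 0 := by
    rw [ne_eq, Real.toNNReal_eq_zero, not_le]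
    exact pow_pos (nrm_pos hx) 2
  simp_rw [l01_hlin_eq_indicator]
  set S : Set ℝ := if b then Iic 0 else Ioi 0
  have hS : MeasurableSet S := by cases b <;> simp [S, measurableSet_Iic, measurableSet_Ioi]
  rw [← integral_map (f := S.indicator 1) (by fun_prop)
      (stronglyMeasurable_const.indicator hS).aestronglyMeasurable,
    integral_indicator_one hS, gauss_map_dotp, measureReal_def]
  cases b
  · rw [show S = Ioi 0 from rfl, gaussianReal_Ioi hv, hσ,
      ENNReal.toReal_ofReal (gaussTail_nonneg _)]
    simp [yval, neg_div]
  · rw [show S = Iic 0 from rfl, gaussianReal_Iic hv, hσ,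
      ENNReal.toReal_ofReal (gaussTail_nonneg _)]
    simp [yval]

end LinearClassifier

/-- Expected joint error of the Gaussian linear posterior (Equation (21)): for any domain `P`
over `ℝ^d×{−1,+1}` with `P`-almost surely `x ≠ 0` and any `w ∈ ℝ^d`,
`e_P(ρ_w) = E_{(x,y)~P} [Φ(y·(w·x)/‖x‖)]²`. -/
theorem gaussian_expected_joint_error (d : ℕ) (w : Fin d → ℝ)
    (P : Measure ((Fin d → ℝ) × Bool)) [IsProbabilityMeasure P]
    (hP : ∀ᵐ z ∂P, z.1 ≠ 0) :
    ∫ p, ∫ z, l01 (hlin p.1 z.1) z.2 * l01 (hlin p.2 z.1) z.2 ∂P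
        ∂((gauss w).prod (gauss w))
      = ∫ z, (gaussTail (yval z.2 * dotp w z.1 / nrm z.1)) ^ 2 ∂P := by
  have hbound : ∀ a b c e : Bool, ‖l01 a b * l01 c e‖ ≤ 1 := by
    intro a b c e
    simp only [l01]
    split_ifs <;> norm_num
  rw [integral_integral_swap
    (Integrable.of_bound (by fun_prop) 1 (ae_of_all _ fun _ => hbound _ _ _ _))]
  refine integral_congr_ae ?_
  filter_upwards [hP] with z hz
  rw [integral_prod_mul (fun u => l01 (hlin u z.1) z.2) (fun u => l01 (hlin u z.1) z.2),
    integral_l01_hlin w hz, sq]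

end
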